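/- arXiv:2111.07864 — 5 statements merged into one kernel-verified Lean document; each statement's English description precedes it below -/
import Mathlib

section
/- Let x_1,...,x_n be real numbers with empirical mean μ̂ and empirical standard deviation σ̂ (population version, i.e. σ̂² = (1/n)Σ(x_i−μ̂)²) with σ̂ > 0. For any subset S ⊆ {1,...,n} of size m, |Σ_{i∈S} (x_i − μ̂)/σ̂| ≤ √(m(n−m)). -/
open Finset

/-- Cauchy–Schwarz on `S` and on `Sᶜ`, whose sums are opposite when the total sum vanishes,
weighted by `#Sᶜ` and `#S` respectively. -/
theorem card_mul_sq_sum_le_of_sum_eq_zero {ι : Type*} [Fintype ι] (f : ι → ℝ)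
    (hf : ∑ i, f i = 0) (S : Finset ι) :
    Fintype.card ι * (∑ i ∈ S, f i) ^ 2 ≤
      #S * (Fintype.card ι - #S) * ∑ i, f i ^ 2 := by
  classical
  have hcard : (Fintype.card ι : ℝ) = #S + #Sᶜ := by
    exact_mod_cast (card_add_card_compl S).symm
  have hcompl : ∑ i ∈ Sᶜ, f i = -∑ i ∈ S, f i := by
    linarith [sum_add_sum_compl S f]
  have hS := sq_sum_le_card_mul_sum_sq (s := S) (f := f)
  have hSc := sq_sum_le_card_mul_sum_sq (s := Sᶜ) (f := f)
  rw [hcompl, neg_sq] at hSc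
  rw [hcard, ← sum_add_sum_compl S fun i ↦ f i ^ 2]
  have hS' := mul_le_mul_of_nonneg_left hS (Nat.cast_nonneg #Sᶜ)
  have hSc' := mul_le_mul_of_nonneg_left hSc (Nat.cast_nonneg #S)
  nlinarith

theorem standardization_bound_general (n : ℕ) (x : Fin n → ℝ) (μ σ : ℝ)
    (hμ : μ = (∑ i, x i) / n)
    (hσ : σ = Real.sqrt ((∑ i, (x i - μ) ^ 2) / n))
    (S : Finset (Fin n)) :
    |∑ i ∈ S, (x i - μ) / σ| ≤
      Real.sqrt ((S.card : ℝ) * ((n : ℝ) - (S.card : ℝ))) := by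
  rcases n.eq_zero_or_pos with rfl | hn
  · simp [eq_empty_of_isEmpty S]
  have hn' : (n : ℝ) ≠ 0 := by positivity
  have hcentered : ∑ i, (x i - μ) = 0 := by
    simp [sum_sub_distrib, hμ, mul_div_cancel₀ _ hn']
  have hvar : ∑ i, (x i - μ) ^ 2 = n * σ ^ 2 := by
    rw [hσ, Real.sq_sqrt (by positivity), mul_div_cancel₀ _ hn']
  have hm : (0 : ℝ) ≤ #S * (n - #S) := by
    have : (#S : ℝ) ≤ n := by exact_mod_cast (card_le_univ S).trans_eq (Fintype.card_fin n)
    exact mul_nonneg (Nat.cast_nonneg _) (sub_nonneg.mpr this)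
  have hbound : (∑ i ∈ S, (x i - μ)) ^ 2 ≤ #S * (n - #S) * σ ^ 2 := by
    have key := card_mul_sq_sum_le_of_sum_eq_zero _ hcentered S
    rw [Fintype.card_fin, hvar, mul_left_comm _ (n : ℝ), mul_assoc] at key
    exact le_of_mul_le_mul_left (by linarith) (Nat.cast_pos.mpr hn)
  apply Real.abs_le_sqrt
  rw [← sum_div, div_pow]
  -- also valid for `σ = 0`, where the junk value `_ / 0 = 0` makes the left side vanish
  exact div_le_of_le_mul₀ (sq_nonneg σ) hm hbound

/-- Standardization bound: for any m-element subset S of indices,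
`|∑_{i∈S} (x i − μ)/σ| ≤ √(m(n−m))`. -/
theorem standardization_bound (n : ℕ) (x : Fin n → ℝ) (μ σ : ℝ)
    (hμ : μ = (∑ i, x i) / n)
    (hσ : σ = Real.sqrt ((∑ i, (x i - μ) ^ 2) / n))
    (hσpos : 0 < σ)
    (S : Finset (Fin n)) :
    |∑ i ∈ S, (x i - μ) / σ| ≤
      Real.sqrt ((S.card : ℝ) * ((n : ℝ) - (S.card : ℝ))) :=
  standardization_bound_general n x μ σ hμ hσ S
end

section
/- With the notation of the standardization bound, for 0 < m < n the bound √(m(n−m)) is attained if and only if all selected values are equal to μ̂ + s·√((n−m)/m)·σ̂ and all non-selected values equal μ̂ − s·√(m/(n−m))·σ̂ for some s ∈ {−1,1}. -/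
/-! Put `y i = (x i - μ) / σ`, so that `∑ y = 0` and `∑ y² = n`, and let `T = ∑_{i ∈ S} y i`;
then `∑_{i ∉ S} y i = -T`. Cauchy–Schwarz on `S` and on its complement gives
`T² / m + T² / (n - m) ≤ ∑ y² = n`, i.e. `T² ≤ m (n - m)`, with equality exactly when `y` is
constant on `S` and on its complement. These constants are `T / m` and `-T / (n - m)`, and
`T = ±√(m (n - m))` turns them into `±√((n - m) / m)` and `∓√(m / (n - m))`. -/

open Finset

theorem Real.sqrt_mul_div_left {a : ℝ} (ha : 0 ≤ a) (b : ℝ) : √(a * b) / a = √(b / a) := by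
  rcases ha.eq_or_lt with rfl | ha
  · simp
  rw [← mul_div_mul_left b a ha.ne', Real.sqrt_div' _ (mul_self_nonneg a), Real.sqrt_mul_self ha.le]

theorem abs_eq_sqrt_mul_iff {t a b : ℝ} (ha : 0 < a) (hb : 0 < b) :
    |t| = √(a * b) ↔ t ^ 2 / a + t ^ 2 / b = a + b := by
  rw [← Real.sqrt_sq_eq_abs, Real.sqrt_inj (sq_nonneg t) (by positivity)]
  field_simp
  constructor <;> intro h <;> nlinarith

namespace Finset

variable {ι : Type*}

theorem sum_sq_sub_mean (s : Finset ι) (f : ι → ℝ) :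
    ∑ i ∈ s, (f i - (∑ j ∈ s, f j) / #s) ^ 2 = ∑ i ∈ s, f i ^ 2 - (∑ i ∈ s, f i) ^ 2 / #s := by
  rcases s.eq_empty_or_nonempty with rfl | hs
  · simp
  have hcard : (#s : ℝ) ≠ 0 := by exact_mod_cast hs.card_pos.ne'
  simp only [sub_sq, sum_add_distrib, sum_sub_distrib, ← sum_mul, ← mul_sum, sum_const,
    nsmul_eq_mul]
  field_simp
  ring

theorem sq_sum_div_card_le_sum_sq (s : Finset ι) (f : ι → ℝ) :
    (∑ i ∈ s, f i) ^ 2 / #s ≤ ∑ i ∈ s, f i ^ 2 := by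
  have := sum_sq_sub_mean s f ▸ sum_nonneg fun i _ => sq_nonneg (f i - (∑ j ∈ s, f j) / #s)
  linarith

theorem sq_sum_div_card_eq_sum_sq_iff (s : Finset ι) (f : ι → ℝ) :
    (∑ i ∈ s, f i) ^ 2 / #s = ∑ i ∈ s, f i ^ 2 ↔ ∀ i ∈ s, f i = (∑ j ∈ s, f j) / #s := by
  rw [eq_comm, ← sub_eq_zero, ← sum_sq_sub_mean, sum_eq_zero_iff_of_nonneg fun i _ => sq_nonneg _]
  simp only [sq_eq_zero_iff, sub_eq_zero]

theorem sq_sum_div_card_add_compl_eq_sum_sq_iff [Fintype ι] [DecidableEq ι] (s : Finset ι)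
    (f : ι → ℝ) :
    (∑ i ∈ s, f i) ^ 2 / #s + (∑ i ∈ sᶜ, f i) ^ 2 / #sᶜ = ∑ i, f i ^ 2 ↔
      (∀ i ∈ s, f i = (∑ j ∈ s, f j) / #s) ∧ (∀ i ∈ sᶜ, f i = (∑ j ∈ sᶜ, f j) / #sᶜ) := by
  rw [← sum_add_sum_compl s, add_eq_add_iff_eq_and_eq (sq_sum_div_card_le_sum_sq s f)
    (sq_sum_div_card_le_sum_sq sᶜ f), sq_sum_div_card_eq_sum_sq_iff, sq_sum_div_card_eq_sum_sq_iff]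

theorem sum_sub_mean_eq_zero (s : Finset ι) (f : ι → ℝ) :
    ∑ i ∈ s, (f i - (∑ j ∈ s, f j) / #s) = 0 := by
  rcases s.eq_empty_or_nonempty with rfl | hs
  · simp
  have hcard : (#s : ℝ) ≠ 0 := by exact_mod_cast hs.card_pos.ne'
  rw [sum_sub_distrib, sum_const, nsmul_eq_mul, mul_div_cancel₀ _ hcard, sub_self]

theorem sum_sq_div_eq_card {s : Finset ι} {f : ι → ℝ} {σ : ℝ}
    (hσ : σ = √((∑ i ∈ s, f i ^ 2) / #s)) (hσ0 : σ ≠ 0) : ∑ i ∈ s, (f i / σ) ^ 2 = #s := by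
  have hσsq : σ ^ 2 = (∑ i ∈ s, f i ^ 2) / #s := by rw [hσ, Real.sq_sqrt (by positivity)]
  have hf : ∑ i ∈ s, f i ^ 2 ≠ 0 := fun h => hσ0 (by rw [hσ, h, zero_div, Real.sqrt_zero])
  simp only [div_pow, ← sum_div, hσsq, div_div_cancel₀ hf]

end Finset

theorem abs_sum_eq_sqrt_iff_of_standardized {ι : Type*} [Fintype ι] [DecidableEq ι] {n m : ℕ}
    {y : ι → ℝ} (hn : Fintype.card ι = n) (hsum : ∑ i, y i = 0) (hsq : ∑ i, y i ^ 2 = n)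
    {S : Finset ι} (hS : #S = m) (hm0 : 0 < m) (hmn : m < n) :
    |∑ i ∈ S, y i| = √(m * (n - m)) ↔ ∃ s : ℝ, (s = 1 ∨ s = -1) ∧
      (∀ i ∈ S, y i = s * √((n - m) / m)) ∧ (∀ i ∉ S, y i = -(s * √(m / (n - m)))) := by
  have hm : (0 : ℝ) < m := by exact_mod_cast hm0
  have hk : (0 : ℝ) < n - m := sub_pos.2 (by exact_mod_cast hmn)
  have hcard : (#Sᶜ : ℝ) = n - m := by rw [card_compl, hn, hS, Nat.cast_sub hmn.le]
  have hcompl : ∑ i ∈ Sᶜ, y i = -∑ i ∈ S, y i := by linarith [sum_add_sum_compl S y]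
  constructor
  · intro h
    have hconst := (sq_sum_div_card_add_compl_eq_sum_sq_iff S y).1 <| by
      rw [hS, hcard, hcompl, neg_sq, hsq]
      exact ((abs_eq_sqrt_mul_iff hm hk).1 h).trans (add_sub_cancel _ _)
    obtain ⟨s, hs, hT⟩ : ∃ s : ℝ, (s = 1 ∨ s = -1) ∧ ∑ i ∈ S, y i = s * √(m * (n - m)) := by
      rcases (abs_eq (Real.sqrt_nonneg _)).1 h with h | h
      exacts [⟨1, .inl rfl, by rw [h, one_mul]⟩, ⟨-1, .inr rfl, by rw [h, neg_one_mul]⟩]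
    refine ⟨s, hs, fun i hi => ?_, fun i hi => ?_⟩
    · rw [hconst.1 i hi, hS, hT, mul_div_assoc, Real.sqrt_mul_div_left hm.le]
    · rw [hconst.2 i (mem_compl.2 hi), hcompl, hcard, hT, neg_div, mul_div_assoc, mul_comm (m : ℝ),
        Real.sqrt_mul_div_left hk.le]
  · rintro ⟨s, hs, hSval, -⟩
    have hT : ∑ i ∈ S, y i = s * √(m * (n - m)) := by
      rw [sum_congr rfl hSval, sum_const, hS, nsmul_eq_mul, ← Real.sqrt_mul_div_left hm.le]
      field_simp
    rw [hT, abs_mul, abs_of_nonneg (Real.sqrt_nonneg _)]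
    rcases hs with rfl | rfl <;> simp

/-- Equality case of the standardization bound for 0 < m < n. -/
theorem standardization_bound_eq_iff (n m : ℕ) (x : Fin n → ℝ) (μ σ : ℝ)
    (hμ : μ = (∑ i, x i) / n)
    (hσ : σ = Real.sqrt ((∑ i, (x i - μ) ^ 2) / n))
    (hσpos : 0 < σ)
    (S : Finset (Fin n)) (hS : S.card = m) (hm0 : 0 < m) (hmn : m < n) :
    |∑ i ∈ S, (x i - μ) / σ| = Real.sqrt ((m : ℝ) * ((n : ℝ) - (m : ℝ))) ↔
      ∃ s : ℝ, (s = 1 ∨ s = -1) ∧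
        (∀ i ∈ S, x i = μ + s * Real.sqrt (((n : ℝ) - (m : ℝ)) / (m : ℝ)) * σ) ∧
        (∀ i ∉ S, x i = μ - s * Real.sqrt ((m : ℝ) / ((n : ℝ) - (m : ℝ))) * σ) := by
  have hsum : ∑ i, (x i - μ) / σ = 0 := by
    have h := sum_sub_mean_eq_zero univ x
    rw [card_fin, ← hμ] at h
    rw [← sum_div, h, zero_div]
  have hsq : ∑ i, ((x i - μ) / σ) ^ 2 = n := by
    have h := sum_sq_div_eq_card (s := univ) (f := fun i => x i - μ) (by rwa [card_fin]) hσpos.ne'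
    rwa [card_fin] at h
  refine (abs_sum_eq_sqrt_iff_of_standardized (Fintype.card_fin n) hsum hsq hS hm0 hmn).trans <|
    exists_congr fun s => and_congr_right fun _ => and_congr
      (forall₂_congr fun i _ => ?_) (forall₂_congr fun i _ => ?_)
  · rw [div_eq_iff hσpos.ne', sub_eq_iff_eq_add']
  · rw [div_eq_iff hσpos.ne', sub_eq_iff_eq_add', neg_mul, ← sub_eq_add_neg]
end

section
/- Let c_1,...,c_{2m} be real numbers with empirical mean μ̂ and population standard deviation σ̂ > 0. Then the effect size d = ((1/m)Σ_{i=1}^m c_i − (1/m)Σ_{i=m+1}^{2m} c_i)/σ̂ satisfies |d| ≤ 2. -/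
/-!
Centre the data at `μ` and put the sign `+1` on the first group and `-1` on the second.
Because the groups have the same size, the centring cancels in the difference of the group
sums, so `m` times the numerator of the effect size is the inner product of the sign vector
with `c - μ`. Cauchy–Schwarz bounds its square by `2m · ∑ (cᵢ - μ)² = (2mσ)²`.
-/

open Finset

theorem Finset.sq_sum_sub_sum_le_card_mul_sum_sq {ι : Type*} [DecidableEq ι] {s t : Finset ι}
    (hst : Disjoint s t) (f : ι → ℝ) :
    (∑ i ∈ s, f i - ∑ i ∈ t, f i) ^ 2 ≤ #(s ∪ t) * ∑ i ∈ s ∪ t, f i ^ 2 := by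
  have key := sq_sum_le_card_mul_sum_sq (s := s ∪ t) (f := fun i ↦ if i ∈ s then f i else -f i)
  have hs : ∑ i ∈ s, (if i ∈ s then f i else -f i) = ∑ i ∈ s, f i :=
    sum_congr rfl fun i hi ↦ if_pos hi
  have ht : ∑ i ∈ t, (if i ∈ s then f i else -f i) = -∑ i ∈ t, f i := by
    rw [← sum_neg_distrib]
    exact sum_congr rfl fun i hi ↦ if_neg (disjoint_right.mp hst hi)
  rw [sum_union hst, hs, ht, ← sub_eq_add_neg] at key
  refine key.trans_eq (congrArg _ (sum_congr rfl fun i _ ↦ ?_))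
  split_ifs <;> ring

theorem Finset.sq_sum_sub_sum_le_of_card_eq {ι : Type*} [DecidableEq ι] {s t : Finset ι}
    (hst : Disjoint s t) (hcard : #t = #s) (c : ι → ℝ) (μ : ℝ) :
    (∑ i ∈ s, c i - ∑ i ∈ t, c i) ^ 2 ≤ 2 * #s * ∑ i ∈ s ∪ t, (c i - μ) ^ 2 := by
  have hshift : ∑ i ∈ s, c i - ∑ i ∈ t, c i = ∑ i ∈ s, (c i - μ) - ∑ i ∈ t, (c i - μ) := by
    simp only [sum_sub_distrib, sum_const, hcard]
    ring
  have hunion : (#(s ∪ t) : ℝ) = 2 * #s := by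
    rw [card_union_of_disjoint hst, hcard]
    push_cast
    ring
  rw [hshift, ← hunion]
  exact sq_sum_sub_sum_le_card_mul_sum_sq hst _

theorem weat_effect_size_bound_general (m : ℕ) (c : ℕ → ℝ) (μ σ : ℝ)
    (hσ : σ = Real.sqrt ((∑ i ∈ Finset.range (2 * m), (c i - μ) ^ 2) / (2 * m)))
    (hσpos : 0 < σ) :
    |((∑ i ∈ Finset.range m, c i) / m - (∑ i ∈ Finset.Ico m (2 * m), c i) / m) / σ| ≤ 2 := by
  have hm : (0 : ℝ) < m := by
    rcases Nat.eq_zero_or_pos m with rfl | hm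
    · simp [hσ] at hσpos
    · exact_mod_cast hm
  have hsplit : range (2 * m) = range m ∪ Ico m (2 * m) := by
    rw [range_eq_Ico, range_eq_Ico, Ico_union_Ico_eq_Ico (Nat.zero_le m) (by omega)]
  have hdisj : Disjoint (range m) (Ico m (2 * m)) := by
    rw [range_eq_Ico]
    exact Ico_disjoint_Ico_consecutive 0 m (2 * m)
  have hcard : #(Ico m (2 * m)) = #(range m) := by
    rw [Nat.card_Ico, card_range]
    omega
  have hvar : ∑ i ∈ range (2 * m), (c i - μ) ^ 2 = 2 * m * σ ^ 2 := by
    rw [hσ, Real.sq_sqrt (by positivity)]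
    field_simp
  have hdiff : |∑ i ∈ range m, c i - ∑ i ∈ Ico m (2 * m), c i| ≤ 2 * m * σ := by
    refine abs_le_of_sq_le_sq ?_ (by positivity)
    calc _ ≤ 2 * #(range m) * ∑ i ∈ range (2 * m), (c i - μ) ^ 2 :=
          hsplit ▸ sq_sum_sub_sum_le_of_card_eq hdisj hcard c μ
      _ = (2 * m * σ) ^ 2 := by rw [hvar, card_range]; ring
  rw [← sub_div, div_div, abs_div, abs_of_pos (mul_pos hm hσpos),
    div_le_iff₀ (mul_pos hm hσpos)]
  linarith

/-- The WEAT effect size for two groups of equal size m is bounded by 2 in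
absolute value. -/
theorem weat_effect_size_bound (m : ℕ) (hm : 0 < m) (c : ℕ → ℝ) (μ σ : ℝ)
    (hμ : μ = (∑ i ∈ Finset.range (2 * m), c i) / (2 * m))
    (hσ : σ = Real.sqrt ((∑ i ∈ Finset.range (2 * m), (c i - μ) ^ 2) / (2 * m)))
    (hσpos : 0 < σ) :
    |((∑ i ∈ Finset.range m, c i) / m - (∑ i ∈ Finset.Ico m (2 * m), c i) / m) / σ| ≤ 2 :=
  weat_effect_size_bound_general m c μ σ hσ hσpos
end

section
/- The WEAT effect size attains its extreme value ±2 if and only if c_1 = ... = c_m and c_{m+1} = ... = c_{2m} with c_1 ≠ c_{m+1}, i.e. all values within each group coincide. -/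
/-!
Split the pooled sample into the two groups, with means `a` and `b` and population variances
`v₁` and `v₂`. Since the groups have equal size, the pooled mean is `(a + b) / 2`, and the law of
total variance gives `σ² = (v₁ + v₂) / 2 + (a - b)² / 4`. Hence `d² = (a - b)² / σ² ≤ 4`, with
equality exactly when `v₁ = v₂ = 0`, i.e. both groups are constant, and `a ≠ b`.
-/

open Finset
open scoped BigOperators

section Expect

variable {ι : Type*} {s t : Finset ι}

section Module

variable {M : Type*} [AddCommMonoid M] [Module ℚ≥0 M]

lemma Finset.expect_eq_of_forall_eq {f : ι → M} {i₀ : ι} (hi₀ : i₀ ∈ s)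
    (h : ∀ i ∈ s, f i = f i₀) : 𝔼 i ∈ s, f i = f i₀ := by
  rw [expect_congr rfl h, expect_const ⟨i₀, hi₀⟩]

lemma Finset.forall_eq_expect_iff {f : ι → M} {i₀ : ι} (hi₀ : i₀ ∈ s) :
    (∀ i ∈ s, f i = 𝔼 j ∈ s, f j) ↔ ∀ i ∈ s, f i = f i₀ :=
  ⟨fun h i hi ↦ (h i hi).trans (h i₀ hi₀).symm,
    fun h i hi ↦ (h i hi).trans (expect_eq_of_forall_eq hi₀ h).symm⟩

end Module

variable {K : Type*} [Field K] [CharZero K]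

lemma Finset.expect_union_of_card_eq [DecidableEq ι] (hst : Disjoint s t) (hcard : #s = #t)
    (f : ι → K) : 𝔼 i ∈ s ∪ t, f i = (𝔼 i ∈ s, f i + 𝔼 i ∈ t, f i) / 2 := by
  rcases s.eq_empty_or_nonempty with rfl | hs
  · obtain rfl : t = ∅ := card_eq_zero.1 (by rw [← hcard, card_empty])
    simp
  have hs' : (#s : K) ≠ 0 := by exact_mod_cast hs.card_ne_zero
  simp only [expect_eq_sum_div_card, sum_union hst, card_union_of_disjoint hst, ← hcard]
  push_cast
  field_simp
  ring

lemma Finset.expect_sq_sub_eq_expect_sq_sub_expect_add_sq (hs : s.Nonempty) (f : ι → K)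
    (x : K) :
    𝔼 i ∈ s, (f i - x) ^ 2 =
      𝔼 i ∈ s, (f i - 𝔼 j ∈ s, f j) ^ 2 + (𝔼 j ∈ s, f j - x) ^ 2 := by
  set a := 𝔼 j ∈ s, f j
  have hdev : 𝔼 i ∈ s, (f i - a) = 0 := by
    rw [expect_sub_distrib, expect_const hs, sub_self]
  calc 𝔼 i ∈ s, (f i - x) ^ 2
      = 𝔼 i ∈ s, ((f i - a) ^ 2 + 2 * (a - x) * (f i - a) + (a - x) ^ 2) :=
        expect_congr rfl fun i _ ↦ by ring
    _ = 𝔼 i ∈ s, (f i - a) ^ 2 + (a - x) ^ 2 := by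
        rw [expect_add_distrib, expect_add_distrib, ← mul_expect, hdev, expect_const hs]
        ring

end Expect

variable {ι : Type*}

noncomputable def popVariance (s : Finset ι) (f : ι → ℝ) : ℝ :=
  𝔼 i ∈ s, (f i - 𝔼 j ∈ s, f j) ^ 2

noncomputable def popStdDev (s : Finset ι) (f : ι → ℝ) : ℝ :=
  √(popVariance s f)

/-- When the pooled standard deviation vanishes, this is `0` by the convention `x / 0 = 0`. -/
noncomputable def effectSize [DecidableEq ι] (s t : Finset ι) (f : ι → ℝ) : ℝ :=
  (𝔼 i ∈ s, f i - 𝔼 i ∈ t, f i) / popStdDev (s ∪ t) f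

lemma popVariance_nonneg (s : Finset ι) (f : ι → ℝ) : 0 ≤ popVariance s f :=
  expect_nonneg fun _ _ ↦ sq_nonneg _

lemma popVariance_eq_zero_iff {s : Finset ι} {f : ι → ℝ} :
    popVariance s f = 0 ↔ ∀ i ∈ s, f i = 𝔼 j ∈ s, f j := by
  simp only [popVariance, expect_eq_zero_iff_of_nonneg fun _ _ ↦ sq_nonneg _, sq_eq_zero_iff,
    sub_eq_zero]

lemma popVariance_union_of_card_eq [DecidableEq ι] {s t : Finset ι} (hst : Disjoint s t)
    (hcard : #s = #t) (hs : s.Nonempty) (f : ι → ℝ) :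
    popVariance (s ∪ t) f = (popVariance s f + popVariance t f) / 2 +
      (𝔼 i ∈ s, f i - 𝔼 i ∈ t, f i) ^ 2 / 4 := by
  have ht : t.Nonempty := by rw [← card_pos, ← hcard]; exact hs.card_pos
  rw [popVariance, expect_union_of_card_eq hst hcard, expect_union_of_card_eq hst hcard,
    expect_sq_sub_eq_expect_sq_sub_expect_add_sq hs,
    expect_sq_sub_eq_expect_sq_sub_expect_add_sq ht, popVariance, popVariance]
  ring

lemma abs_div_sqrt_add_sq_div_four_eq_two_iff {x v : ℝ} (hv : 0 ≤ v) :
    |x / √(v + x ^ 2 / 4)| = 2 ↔ v = 0 ∧ x ≠ 0 := by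
  rcases eq_or_ne x 0 with rfl | hx
  · simp
  have hw : 0 < v + x ^ 2 / 4 := by positivity
  rw [abs_div, abs_of_pos (Real.sqrt_pos.2 hw), div_eq_iff (Real.sqrt_pos.2 hw).ne',
    ← sq_eq_sq₀ (abs_nonneg x) (by positivity), sq_abs, mul_pow, Real.sq_sqrt hw.le]
  constructor
  · intro h; exact ⟨by linarith, hx⟩
  · rintro ⟨rfl, -⟩; ring

theorem abs_effectSize_eq_two_iff [DecidableEq ι] {s t : Finset ι} (hst : Disjoint s t)
    (hcard : #s = #t) {i₀ j₀ : ι} (hi₀ : i₀ ∈ s) (hj₀ : j₀ ∈ t) (f : ι → ℝ) :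
    |effectSize s t f| = 2 ↔
      (∀ i ∈ s, f i = f i₀) ∧ (∀ j ∈ t, f j = f j₀) ∧ f i₀ ≠ f j₀ := by
  have hvar : 0 ≤ (popVariance s f + popVariance t f) / 2 := by
    have := popVariance_nonneg s f; have := popVariance_nonneg t f; positivity
  rw [effectSize, popStdDev, popVariance_union_of_card_eq hst hcard ⟨i₀, hi₀⟩,
    abs_div_sqrt_add_sq_div_four_eq_two_iff hvar, div_eq_zero_iff, or_iff_left two_ne_zero,
    add_eq_zero_iff_of_nonneg (popVariance_nonneg s f) (popVariance_nonneg t f),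
    popVariance_eq_zero_iff, popVariance_eq_zero_iff, forall_eq_expect_iff hi₀,
    forall_eq_expect_iff hj₀, sub_ne_zero, and_assoc]
  refine and_congr_right fun hs ↦ and_congr_right fun ht ↦ ?_
  rw [expect_eq_of_forall_eq hi₀ hs, expect_eq_of_forall_eq hj₀ ht]

theorem weat_effect_size_extremal_iff_general (m : ℕ) (hm : 0 < m) (c : ℕ → ℝ) (μ σ : ℝ)
    (hμ : μ = (∑ i ∈ Finset.range (2 * m), c i) / (2 * m))
    (hσ : σ = Real.sqrt ((∑ i ∈ Finset.range (2 * m), (c i - μ) ^ 2) / (2 * m))) :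
    |((∑ i ∈ Finset.range m, c i) / m - (∑ i ∈ Finset.Ico m (2 * m), c i) / m) / σ| = 2 ↔
      ((∀ i < m, c i = c 0) ∧ (∀ i, m ≤ i → i < 2 * m → c i = c m) ∧ c 0 ≠ c m) := by
  have hcard : #(Ico m (2 * m)) = m := by rw [Nat.card_Ico]; omega
  have hdisj : Disjoint (range m) (Ico m (2 * m)) := by
    rw [range_eq_Ico]; exact Ico_disjoint_Ico_consecutive _ _ _
  have hsplit : range (2 * m) = range m ∪ Ico m (2 * m) := by
    rw [range_eq_Ico, range_eq_Ico, Ico_union_Ico_eq_Ico (Nat.zero_le m) (by omega)]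
  have hcast : ((2 * m : ℕ) : ℝ) = 2 * m := by push_cast; ring
  have hμ' : μ = 𝔼 i ∈ range (2 * m), c i := by
    rw [hμ, expect_eq_sum_div_card, card_range, hcast]
  have hσ' : σ = popStdDev (range m ∪ Ico m (2 * m)) c := by
    rw [hσ, popStdDev, popVariance, ← hsplit, ← hμ', expect_eq_sum_div_card, card_range, hcast]
  have heffect : ((∑ i ∈ range m, c i) / m - (∑ i ∈ Ico m (2 * m), c i) / m) / σ =
      effectSize (range m) (Ico m (2 * m)) c := by
    rw [effectSize, ← hσ', expect_eq_sum_div_card, expect_eq_sum_div_card, card_range, hcard]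
  rw [heffect, abs_effectSize_eq_two_iff hdisj (by rw [card_range, hcard])
    (mem_range.2 hm) (mem_Ico.2 ⟨le_rfl, by omega⟩)]
  simp only [mem_range, mem_Ico, and_imp]

/-- The WEAT effect size attains ±2 iff both groups are constant (with distinct
values across groups). -/
theorem weat_effect_size_extremal_iff (m : ℕ) (hm : 0 < m) (c : ℕ → ℝ) (μ σ : ℝ)
    (hμ : μ = (∑ i ∈ Finset.range (2 * m), c i) / (2 * m))
    (hσ : σ = Real.sqrt ((∑ i ∈ Finset.range (2 * m), (c i - μ) ^ 2) / (2 * m)))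
    (hσpos : 0 < σ) :
    |((∑ i ∈ Finset.range m, c i) / m - (∑ i ∈ Finset.Ico m (2 * m), c i) / m) / σ| = 2 ↔
      ((∀ i < m, c i = c 0) ∧ (∀ i, m ≤ i → i < 2 * m → c i = c m) ∧ c 0 ≠ c m) :=
  weat_effect_size_extremal_iff_general m hm c μ σ hμ hσ
end

section
/- If w is equidistant in angle to the two attributes (α = θ/2, both sides), then MAC = 1 − cos(θ/2); in particular for θ ≠ π the MAC score differs from 1 even though the word is unbiased (equally similar to both attributes). -/
open Real

theorem Real.cos_half_pos {θ : ℝ} (hθ : θ ∈ Set.Ioo (-π) π) : 0 < cos (θ / 2) :=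
  cos_pos_of_mem_Ioo ⟨by linarith [hθ.1], by linarith [hθ.2]⟩

/-- If the word is equidistant in angle to the two attributes (α = θ/2), then
MAC = 1 − cos(θ/2), which differs from 1 whenever θ ∈ (0, π). -/
theorem mac_equidistant (θ : ℝ) (hθ : θ ∈ Set.Ioo 0 Real.pi) :
    (1 / 2 : ℝ) * ((1 - Real.cos (θ / 2)) + (1 - Real.cos (θ - θ / 2)))
        = 1 - Real.cos (θ / 2) ∧
      1 - Real.cos (θ / 2) ≠ 1 := by
  have hcos : 0 < cos (θ / 2) := cos_half_pos ⟨by linarith [hθ.1, pi_pos], hθ.2⟩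
  refine ⟨by rw [sub_half]; ring, ?_⟩
  rw [Ne, sub_eq_self]
  exact hcos.ne'
end
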